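/- arXiv:2503.19515 — 7 statements merged into one kernel-verified Lean document; each statement's English description precedes it below -/
import Mathlib

section
/- Under the stated hypotheses there exists a point α_g ∈ (0,1) that partitions the unit interval into two sets U₁ = (0, α_g) and U₂ = (α_g, 1) such that H(α) > 1 for every α ∈ U₁ and H(α) < 1 for every α ∈ U₂ (i.e., the Bayes factor indicates no outlier for small discounting parameters and an outlier for large ones). -/
/-!
By (ii) and (iii), `H'` has the sign of `q₁ - q₂`, so `H` strictly decreases on `(0, α•]` and
strictly increases on `[α•, 1]`; as `H(1) = 1`, this gives `H < 1` on `[α•, 1)`. Since `π > 0` on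
`Θ`, the bound `π ^ α ≤ 1 + π` and dominated convergence make the defining formula of `H`
continuous on `[0, 1]`, and its value `m₀ λ(Θ) / ∫_Θ L` at `0` exceeds `1` by (i). The intermediate
value theorem on `(0, α•]` then produces the crossing point.
-/

open MeasureTheory Set Filter Topology Function

lemma norm_mul_rpow_le_mul_one_add {a t α C : ℝ} (ha : ‖a‖ ≤ C) (ht : 0 ≤ t)
    (hα : α ∈ Icc (0 : ℝ) 1) : ‖a * t ^ α‖ ≤ C * (1 + t) := by
  have hpow : t ^ α ≤ 1 + t := by
    rcases le_total t 1 with h | h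
    · linarith [Real.rpow_le_one ht h hα.1]
    · linarith [Real.rpow_le_self_of_one_le h hα.2]
  rw [norm_mul, Real.norm_of_nonneg (Real.rpow_nonneg ht α)]
  exact mul_le_mul ha hpow (Real.rpow_nonneg ht α) ((norm_nonneg a).trans ha)

section RpowWeightedIntegral

variable {X : Type*} [MeasurableSpace X] {μ : Measure X} [IsFiniteMeasure μ] {f w : X → ℝ} {C : ℝ}

lemma integrable_mul_rpow (hf : 0 ≤ᵐ[μ] f) (hfi : Integrable f μ) (hwm : AEStronglyMeasurable w μ)
    (hw : ∀ᵐ x ∂μ, ‖w x‖ ≤ C) {α : ℝ} (hα : α ∈ Icc (0 : ℝ) 1) :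
    Integrable (fun x => w x * f x ^ α) μ :=
  (((integrable_const 1).add hfi).const_mul C).mono'
    (hwm.mul (hfi.aemeasurable.pow_const α).aestronglyMeasurable)
    (by filter_upwards [hf, hw] with x hfx hwx using norm_mul_rpow_le_mul_one_add hwx hfx hα)

lemma continuousOn_integral_mul_rpow (hf : ∀ᵐ x ∂μ, 0 < f x) (hfi : Integrable f μ)
    (hwm : AEStronglyMeasurable w μ) (hw : ∀ᵐ x ∂μ, ‖w x‖ ≤ C) :
    ContinuousOn (fun α => ∫ x, w x * f x ^ α ∂μ) (Icc (0 : ℝ) 1) := by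
  have hf₀ : 0 ≤ᵐ[μ] f := hf.mono fun x hx => hx.le
  refine continuousOn_of_dominated
    (fun α hα => (integrable_mul_rpow hf₀ hfi hwm hw hα).aestronglyMeasurable)
    (fun α hα => by
      filter_upwards [hf₀, hw] with x hfx hwx using norm_mul_rpow_le_mul_one_add hwx hfx hα)
    (((integrable_const 1).add hfi).const_mul C) ?_
  filter_upwards [hf] with x hx
  exact (continuous_const.mul (Real.continuous_const_rpow hx.ne')).continuousOn

lemma integral_mul_rpow_pos_iff (hf : ∀ᵐ x ∂μ, 0 < f x) (hfi : Integrable f μ)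
    (hwm : AEStronglyMeasurable w μ) (hw : ∀ᵐ x ∂μ, ‖w x‖ ≤ C) (hw₀ : 0 ≤ᵐ[μ] w) {α : ℝ}
    (hα : α ∈ Icc (0 : ℝ) 1) :
    0 < ∫ x, w x * f x ^ α ∂μ ↔ 0 < μ (support w) := by
  have hnonneg : 0 ≤ᵐ[μ] fun x => w x * f x ^ α := by
    filter_upwards [hf, hw₀] with x hfx hwx using mul_nonneg hwx (Real.rpow_nonneg hfx.le α)
  have hsupp : support (fun x => w x * f x ^ α) =ᵐ[μ] support w := by
    refine eventuallyEq_set.2 ?_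
    filter_upwards [hf] with x hx
    simp [(Real.rpow_pos_of_pos hx α).ne']
  rw [integral_pos_iff_support_of_nonneg_ae hnonneg
    (integrable_mul_rpow (hf.mono fun x hx => hx.le) hfi hwm hw hα), measure_congr hsupp]

lemma integral_rpow_pos_iff (hf : ∀ᵐ x ∂μ, 0 < f x) (hfi : Integrable f μ) {α : ℝ}
    (hα : α ∈ Icc (0 : ℝ) 1) : 0 < ∫ x, f x ^ α ∂μ ↔ 0 < μ univ := by
  simpa using integral_mul_rpow_pos_iff (w := 1) (C := 1) hf hfi aestronglyMeasurable_const
    (by simp) (ae_of_all _ fun _ => zero_le_one) hα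

lemma continuousOn_integral_rpow (hf : ∀ᵐ x ∂μ, 0 < f x) (hfi : Integrable f μ) :
    ContinuousOn (fun α => ∫ x, f x ^ α ∂μ) (Icc (0 : ℝ) 1) := by
  simpa using continuousOn_integral_mul_rpow (w := 1) (C := 1) hf hfi aestronglyMeasurable_const
    (by simp)

end RpowWeightedIntegral

section BayesFactor

variable {X : Type*} [MeasurableSpace X] {μ : Measure X} {L p : X → ℝ} {C : ℝ}

-- `H(α) = m₀ / (C(α) m₁(α))` for the prior `p` and likelihood `L`, integrating against `μ`.
noncomputable def bayesFactor (μ : Measure X) (L p : X → ℝ) (α : ℝ) : ℝ :=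
  (∫ x, L x * p x ∂μ) / ((∫ x, p x ^ α ∂μ)⁻¹ * ∫ x, L x * p x ^ α ∂μ)

lemma bayesFactor_one (hm : ∫ x, L x * p x ∂μ ≠ 0) : bayesFactor μ L p 1 = ∫ x, p x ∂μ := by
  simp only [bayesFactor, Real.rpow_one, inv_mul_eq_div, div_div_cancel₀ hm]

variable [IsFiniteMeasure μ]

lemma continuousOn_bayesFactor (hp : ∀ᵐ x ∂μ, 0 < p x) (hpi : Integrable p μ)
    (hLm : AEStronglyMeasurable L μ) (hL : ∀ᵐ x ∂μ, ‖L x‖ ≤ C) (hL₀ : 0 ≤ᵐ[μ] L)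
    (hLsupp : 0 < μ (support L)) :
    ContinuousOn (bayesFactor μ L p) (Icc 0 1) := by
  have hF : ∀ α ∈ Icc (0 : ℝ) 1, 0 < ∫ x, p x ^ α ∂μ := fun α hα =>
    (integral_rpow_pos_iff hp hpi hα).2 (hLsupp.trans_le (measure_mono (subset_univ _)))
  refine continuousOn_const.div (((continuousOn_integral_rpow hp hpi).inv₀ fun α hα =>
    (hF α hα).ne').mul (continuousOn_integral_mul_rpow hp hpi hLm hL)) fun α hα => ?_
  exact (mul_pos (inv_pos.2 (hF α hα))
    ((integral_mul_rpow_pos_iff hp hpi hLm hL hL₀ hα).2 hLsupp)).ne'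

lemma one_lt_bayesFactor_zero (hpi : Integrable p μ) (hLm : AEStronglyMeasurable L μ)
    (hL : ∀ᵐ x ∂μ, ‖L x‖ ≤ C) (hL₀ : 0 ≤ᵐ[μ] L) (hLsupp : 0 < μ (support L))
    (h : 0 < ∫ x, L x * (μ.real univ * p x - 1) ∂μ) :
    1 < bayesFactor μ L p 0 := by
  have hLi : Integrable L μ := (integrable_const C).mono' hLm hL
  have hLpi : Integrable (fun x => L x * p x) μ := hpi.bdd_mul hLm hL
  have hLpos : 0 < ∫ x, L x ∂μ := (integral_pos_iff_support_of_nonneg_ae hL₀ hLi).2 hLsupp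
  have hvol : 0 < μ.real univ :=
    ENNReal.toReal_pos (hLsupp.trans_le (measure_mono (subset_univ _))).ne' (measure_ne_top μ _)
  have hsplit : ∫ x, L x * (μ.real univ * p x - 1) ∂μ
      = μ.real univ * ∫ x, L x * p x ∂μ - ∫ x, L x ∂μ := by
    simp_rw [mul_sub, mul_one, mul_left_comm (L _)]
    rw [integral_sub (hLpi.const_mul _) hLi, integral_const_mul]
  simp only [bayesFactor, Real.rpow_zero, mul_one, integral_const, smul_eq_mul]
  rw [one_lt_div (by positivity), inv_mul_lt_iff₀ hvol]
  linarith

end BayesFactor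

section Crossing

variable {H H' : ℝ → ℝ} {a b s : ℝ}

theorem exists_crossing_of_strictAntiOn_of_strictMonoOn (hs : s ∈ Ioo a b)
    (hcont : ContinuousOn H (Ioc a b)) (hanti : StrictAntiOn H (Ioc a s))
    (hmono : StrictMonoOn H (Icc s b)) (ha : ∀ᶠ α in 𝓝[>] a, H b < H α) :
    ∃ c ∈ Ioo a b, (∀ α ∈ Ioo a c, H b < H α) ∧ (∀ α ∈ Ioo c b, H α < H b) := by
  have hsb : H s < H b := hmono (left_mem_Icc.2 hs.2.le) (right_mem_Icc.2 hs.2.le) hs.2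
  obtain ⟨α₀, hα₀H, hα₀⟩ := (ha.and (Ioo_mem_nhdsGT hs.1)).exists
  obtain ⟨c, hc, hcH⟩ : H b ∈ H '' Ioo α₀ s :=
    intermediate_value_Ioo' hα₀.2.le
      (hcont.mono (Icc_subset_Ioc_iff hα₀.2.le |>.2 ⟨hα₀.1, hs.2.le⟩)) ⟨hsb, hα₀H⟩
  have hcs : c ∈ Ioc a s := ⟨hα₀.1.trans hc.1, hc.2.le⟩
  refine ⟨c, ⟨hcs.1, hc.2.trans hs.2⟩, fun α hα => ?_, fun α hα => ?_⟩
  · exact hcH ▸ hanti ⟨hα.1, hα.2.le.trans hcs.2⟩ hcs hα.2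
  · rcases le_total α s with hαs | hαs
    · exact hcH ▸ hanti hcs ⟨hcs.1.trans hα.1, hαs⟩ hα.1
    · exact hmono ⟨hαs, hα.2.le⟩ (right_mem_Icc.2 hs.2.le) hα.2

theorem exists_crossing_of_hasDerivAt (hs : s ∈ Ioo a b) (hcont : ContinuousOn H (Ioc a b))
    (hderiv : ∀ α ∈ Ioo a b, HasDerivAt H (H' α) α) (hneg : ∀ α ∈ Ioo a s, H' α < 0)
    (hpos : ∀ α ∈ Ioo s b, 0 < H' α) (ha : ∀ᶠ α in 𝓝[>] a, H b < H α) :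
    ∃ c ∈ Ioo a b, (∀ α ∈ Ioo a c, H b < H α) ∧ (∀ α ∈ Ioo c b, H α < H b) := by
  refine exists_crossing_of_strictAntiOn_of_strictMonoOn hs hcont ?_ ?_ ha
  · refine strictAntiOn_of_deriv_neg (convex_Ioc a s) (hcont.mono (Ioc_subset_Ioc_right hs.2.le))
      fun α hα => ?_
    rw [interior_Ioc] at hα
    rw [(hderiv α ⟨hα.1, hα.2.trans hs.2⟩).deriv]
    exact hneg α hα
  · refine strictMonoOn_of_deriv_pos (convex_Icc s b)
      (hcont.mono (Icc_subset_Ioc_iff hs.2.le |>.2 ⟨hs.1, le_rfl⟩)) fun α hα => ?_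
    rw [interior_Icc] at hα
    rw [(hderiv α ⟨hs.1.trans hα.1, hα.2⟩).deriv]
    exact hpos α hα

end Crossing

theorem exists_crossing_of_eqOn_bayesFactor {X : Type*} [MeasurableSpace X] {μ : Measure X}
    [IsFiniteMeasure μ] {L p : X → ℝ} {H g : ℝ → ℝ} {C s : ℝ} (hp : ∀ᵐ x ∂μ, 0 < p x)
    (hp₁ : ∫ x, p x ∂μ = 1) (hLm : AEStronglyMeasurable L μ) (hL : ∀ᵐ x ∂μ, ‖L x‖ ≤ C)
    (hL₀ : 0 ≤ᵐ[μ] L) (hm : 0 < ∫ x, L x * p x ∂μ)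
    (hcond : 0 < ∫ x, L x * (μ.real univ * p x - 1) ∂μ)
    (hH : EqOn H (bayesFactor μ L p) (Ioc 0 1))
    (hderiv : ∀ α ∈ Ioo (0 : ℝ) 1,
      HasDerivAt H ((∫ x, L x * p x ∂μ) / (∫ x, L x * p x ^ α ∂μ) ^ 2 * g α) α)
    (hs : s ∈ Ioo (0 : ℝ) 1) (hneg : ∀ α ∈ Ioo 0 s, g α < 0) (hpos : ∀ α ∈ Ioo s 1, 0 < g α) :
    ∃ c ∈ Ioo (0 : ℝ) 1, (∀ α ∈ Ioo 0 c, 1 < H α) ∧ (∀ α ∈ Ioo c 1, H α < 1) := by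
  have hpi : Integrable p μ := .of_integral_ne_zero (hp₁ ▸ one_ne_zero)
  have hG := fun α (hα : α ∈ Icc (0 : ℝ) 1) => integral_mul_rpow_pos_iff hp hpi hLm hL hL₀ hα
  have hLsupp : 0 < μ (support L) := (hG 1 (right_mem_Icc.2 zero_le_one)).1 (by simpa using hm)
  have hK := continuousOn_bayesFactor hp hpi hLm hL hL₀ hLsupp
  have hH1 : H 1 = 1 := by rw [hH (right_mem_Ioc.2 one_pos), bayesFactor_one hm.ne', hp₁]
  have hH0 : ∀ᶠ α in 𝓝[>] 0, H 1 < H α := by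
    rw [hH1, ← nhdsWithin_Ioo_eq_nhdsGT one_pos]
    filter_upwards [((hK 0 (left_mem_Icc.2 zero_le_one)).mono Ioo_subset_Icc_self).tendsto
      |>.eventually_const_lt (one_lt_bayesFactor_zero hpi hLm hL hL₀ hLsupp hcond),
      self_mem_nhdsWithin] with α hKα hα
    rwa [hH (Ioo_subset_Ioc_self hα)]
  have hcoef : ∀ α ∈ Ioo (0 : ℝ) 1,
      0 < (∫ x, L x * p x ∂μ) / (∫ x, L x * p x ^ α ∂μ) ^ 2 := fun α hα =>
    div_pos hm (pow_pos ((hG α (Ioo_subset_Icc_self hα)).2 hLsupp) 2)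
  simpa only [hH1] using exists_crossing_of_hasDerivAt hs
    ((hK.mono Ioc_subset_Icc_self).congr hH) hderiv
    (fun α hα => mul_neg_of_pos_of_neg (hcoef α ⟨hα.1, hα.2.trans hs.2⟩) (hneg α hα))
    (fun α hα => mul_pos (hcoef α ⟨hs.1.trans hα.1, hα.2⟩) (hpos α hα)) hH0

theorem bf_crossing_general
    (d : ℕ) (Θ : Set (Fin d → ℝ)) (hΘmeas : MeasurableSet Θ)
    (hΘfin : volume Θ < ⊤)
    (pr L : (Fin d → ℝ) → ℝ) (hLm : Measurable L)
    (c₁ : ℝ) (hc₁ : 0 < c₁)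
    (hlb : ∀ θ ∈ Θ, c₁ ≤ pr θ)
    (hprint : (∫ θ in Θ, pr θ) = 1)
    (hLnn : ∀ θ, 0 ≤ L θ) (CL : ℝ) (hLbd : ∀ θ, L θ ≤ CL)
    (hm0pos : 0 < ∫ θ in Θ, L θ * pr θ)
    (H q₁ q₂ : ℝ → ℝ)
    (hH : ∀ α ∈ Ioc (0:ℝ) 1,
      H α = (∫ θ in Θ, L θ * pr θ) /
        ((∫ θ in Θ, pr θ ^ α)⁻¹ * ∫ θ in Θ, L θ * pr θ ^ α))
    (hcond1 : 0 < ∫ θ in Θ, L θ * ((volume Θ).toReal * pr θ - 1))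
    (hderiv : ∀ α ∈ Ioo (0:ℝ) 1,
      HasDerivAt H
        (((∫ θ in Θ, L θ * pr θ) / (∫ θ in Θ, L θ * pr θ ^ α) ^ 2) *
          (q₁ α - q₂ α)) α)
    (hcross : ∃! αs : ℝ, αs ∈ Ioo (0:ℝ) 1 ∧
      (∀ α ∈ Ioo (0:ℝ) αs, q₁ α - q₂ α < 0) ∧
      q₁ αs - q₂ αs = 0 ∧
      (∀ α ∈ Ioo αs 1, 0 < q₁ α - q₂ α)) :
    ∃ αg ∈ Ioo (0:ℝ) 1,
      (∀ α ∈ Ioo (0:ℝ) αg, 1 < H α) ∧ (∀ α ∈ Ioo αg 1, H α < 1) := by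
  obtain ⟨αs, ⟨hαs, hneg, -, hpos⟩, -⟩ := hcross
  have : IsFiniteMeasure (volume.restrict Θ) := isFiniteMeasure_restrict.2 hΘfin.ne
  exact exists_crossing_of_eqOn_bayesFactor
    (ae_restrict_of_forall_mem hΘmeas fun θ hθ => hc₁.trans_le (hlb θ hθ)) hprint
    hLm.aestronglyMeasurable (ae_of_all _ fun θ => (Real.norm_of_nonneg (hLnn θ)).trans_le (hLbd θ))
    (ae_of_all _ hLnn) hm0pos (by rwa [measureReal_restrict_apply_univ]) (fun α hα => hH α hα)
    hderiv hαs hneg hpos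

/-- Under the stated hypotheses there exists a point `αg ∈ (0,1)` such that the Bayes
factor `H(α) > 1` for every `α ∈ (0, αg)` and `H(α) < 1` for every `α ∈ (αg, 1)`. -/
theorem bf_crossing
    (d : ℕ) (Θ : Set (Fin d → ℝ)) (hΘmeas : MeasurableSet Θ)
    (hΘpos : 0 < volume Θ) (hΘfin : volume Θ < ⊤)
    (pr L : (Fin d → ℝ) → ℝ) (hprm : Measurable pr) (hLm : Measurable L)
    (c₁ c₂ : ℝ) (hc₁ : 0 < c₁)
    (hlb : ∀ θ ∈ Θ, c₁ ≤ pr θ) (hub : ∀ θ ∈ Θ, pr θ ≤ c₂)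
    (hprint : (∫ θ in Θ, pr θ) = 1)
    (hLnn : ∀ θ, 0 ≤ L θ) (CL : ℝ) (hLbd : ∀ θ, L θ ≤ CL)
    (hm0pos : 0 < ∫ θ in Θ, L θ * pr θ)
    (H q₁ q₂ : ℝ → ℝ)
    (hH : ∀ α ∈ Ioc (0:ℝ) 1,
      H α = (∫ θ in Θ, L θ * pr θ) /
        ((∫ θ in Θ, pr θ ^ α)⁻¹ * ∫ θ in Θ, L θ * pr θ ^ α))
    (hq₁ : ∀ α : ℝ, q₁ α =
      (∫ θ in Θ, L θ * pr θ ^ α) * ∫ θ in Θ, pr θ ^ α * Real.log (pr θ))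
    (hq₂ : ∀ α : ℝ, q₂ α =
      (∫ θ in Θ, pr θ ^ α) * ∫ θ in Θ, L θ * pr θ ^ α * Real.log (pr θ))
    (hcond1 : 0 < ∫ θ in Θ, L θ * ((volume Θ).toReal * pr θ - 1))
    (hderiv : ∀ α ∈ Ioo (0:ℝ) 1,
      HasDerivAt H
        (((∫ θ in Θ, L θ * pr θ) / (∫ θ in Θ, L θ * pr θ ^ α) ^ 2) *
          (q₁ α - q₂ α)) α)
    (hcross : ∃! αs : ℝ, αs ∈ Ioo (0:ℝ) 1 ∧
      (∀ α ∈ Ioo (0:ℝ) αs, q₁ α - q₂ α < 0) ∧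
      q₁ αs - q₂ αs = 0 ∧
      (∀ α ∈ Ioo αs 1, 0 < q₁ α - q₂ α)) :
    ∃ αg ∈ Ioo (0:ℝ) 1,
      (∀ α ∈ Ioo (0:ℝ) αg, 1 < H α) ∧ (∀ α ∈ Ioo αg 1, H α < 1) :=
  bf_crossing_general d Θ hΘmeas hΘfin pr L hLm c₁ hc₁ hlb hprint hLnn CL hLbd hm0pos H q₁ q₂ hH
    hcond1 hderiv hcross
end

section
/- For every α ∈ (0,1], det(Σ_L + α⁻¹Σ_*) − det(Σ_L + Σ_*) ≥ (α^(−p) − 1)·det(Σ_*) ≥ 0. -/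
/-!
Write `Σ_* = Q²` with `Q` symmetric and invertible. Then `Σ_L + t Σ_* = Q (M + t I) Q` with
`M = Q⁻¹ Σ_L Q⁻¹` positive semidefinite, so `det (Σ_L + t Σ_*) = det Σ_* · ∏ᵢ (μᵢ + t)` for the
eigenvalues `μᵢ ≥ 0` of `M`. For `c = α⁻¹ ≥ 1`, expanding the products writes
`∏ᵢ (μᵢ + c) - ∏ᵢ (μᵢ + 1)` as a sum of the nonnegative terms `(∏_{i ∈ S} μᵢ) (c ^ (p - #S) - 1)`,
among them `c ^ p - 1` for `S = ∅`.
-/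

open Matrix Finset

theorem Finset.pow_sub_pow_le_prod_add_sub_prod_add {ι R : Type*} [CommRing R] [LinearOrder R]
    [IsStrictOrderedRing R] (s : Finset ι) {μ : ι → R} {a b : R}
    (hμ : ∀ i ∈ s, 0 ≤ μ i) (ha : 0 ≤ a) (hab : a ≤ b) :
    b ^ #s - a ^ #s ≤ ∏ i ∈ s, (μ i + b) - ∏ i ∈ s, (μ i + a) := by
  induction s using Finset.cons_induction with
  | empty => simp
  | cons j s hj ih =>
    rw [forall_mem_cons] at hμ
    obtain ⟨hμj, hμs⟩ := hμ
    have hpow : a ^ #s ≤ ∏ i ∈ s, (μ i + a) := by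
      simpa using prod_le_prod (fun _ _ ↦ ha) fun i hi ↦ le_add_of_nonneg_left (hμs i hi)
    have hmono : ∏ i ∈ s, (μ i + a) ≤ ∏ i ∈ s, (μ i + b) :=
      prod_le_prod (fun i hi ↦ add_nonneg (hμs i hi) ha) fun _ _ ↦ add_le_add_right hab _
    rw [prod_cons, prod_cons, card_cons, pow_succ, pow_succ]
    linarith [mul_nonneg hμj (sub_nonneg.2 hmono), mul_le_mul_of_nonneg_left (ih hμs) (ha.trans hab),
      mul_le_mul_of_nonneg_left hpow (sub_nonneg.2 hab)]

variable {n : Type*} [Fintype n] [DecidableEq n]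

theorem Matrix.IsHermitian.det_add_smul_one {A : Matrix n n ℝ} (hA : A.IsHermitian) (t : ℝ) :
    (A + t • 1).det = ∏ i, (hA.eigenvalues i + t) := by
  have h := congrArg (Polynomial.eval (-t)) hA.charpoly_eq
  have hneg : scalar n (-t) - A = -(A + t • 1) := by
    rw [scalar_apply, neg_add, ← neg_smul, smul_one_eq_diagonal, sub_eq_neg_add]
  simp only [eval_charpoly, hneg, det_neg, Polynomial.eval_prod, Polynomial.eval_sub,
    Polynomial.eval_X, Polynomial.eval_C, RCLike.ofReal_real_eq_id, id] at h
  have hsign : ∏ i, (-t - hA.eigenvalues i) =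
      (-1) ^ Fintype.card n * ∏ i, (hA.eigenvalues i + t) := by
    rw [← card_univ, ← prod_const, ← prod_mul_distrib]; congr 1; ext; ring
  rw [hsign] at h
  exact mul_left_cancel₀ (pow_ne_zero _ (by norm_num)) h

theorem Matrix.PosSemidef.exists_det_add_smul_eq_det_mul_prod {A B : Matrix n n ℝ}
    (hA : A.PosSemidef) (hB : B.PosDef) :
    ∃ μ : n → ℝ, (∀ i, 0 ≤ μ i) ∧ ∀ t : ℝ, (A + t • B).det = B.det * ∏ i, (μ i + t) := by
  obtain ⟨Q, hQH, hQQ⟩ : ∃ Q : Matrix n n ℝ, Q.IsHermitian ∧ Q * Q = B :=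
    open MatrixOrder in
    ⟨CFC.sqrt B, (CFC.sqrt_nonneg B).posSemidef.1, CFC.sqrt_mul_sqrt_self B hB.posSemidef.nonneg⟩
  have hQ : IsUnit Q.det := by
    refine isUnit_of_mul_isUnit_left (y := Q.det) ?_
    rw [← det_mul, hQQ]
    exact hB.isUnit.map detMonoidHom
  set M := Q⁻¹ * A * Q⁻¹
  have hM : M.PosSemidef := by
    simpa only [hQH.inv.eq] using hA.mul_mul_conjTranspose_same Q⁻¹
  refine ⟨hM.1.eigenvalues, hM.eigenvalues_nonneg, fun t ↦ ?_⟩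
  have hcongr : A + t • B = Q * (M + t • 1) * Q := by
    rw [mul_add, add_mul, Matrix.mul_smul, Matrix.smul_mul, mul_one, hQQ, ← mul_assoc, ← mul_assoc,
      mul_nonsing_inv _ hQ, one_mul, mul_assoc, nonsing_inv_mul _ hQ, mul_one]
  rw [hcongr, det_mul, det_mul, hM.1.det_add_smul_one, ← hQQ, det_mul]
  ring

theorem det_difference_lower_bound_general
    (p : ℕ)
    (SL Ss : Matrix (Fin p) (Fin p) ℝ) (hSL : SL.PosDef) (hSs : Ss.PosDef)
    (α : ℝ) (hα : α ∈ Set.Ioc (0:ℝ) 1) :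
    (α ^ (-(p : ℝ)) - 1) * Ss.det ≤ (SL + α⁻¹ • Ss).det - (SL + Ss).det ∧
    0 ≤ (α ^ (-(p : ℝ)) - 1) * Ss.det := by
  obtain ⟨hα0, hα1⟩ := hα
  have hpow : α ^ (-(p : ℝ)) = α⁻¹ ^ p := by
    rw [Real.rpow_neg hα0.le, Real.rpow_natCast, inv_pow]
  have hα_inv : 1 ≤ α⁻¹ := one_le_inv₀ hα0 |>.2 hα1
  obtain ⟨μ, hμ, hdet⟩ := hSL.posSemidef.exists_det_add_smul_eq_det_mul_prod hSs
  have hprod := pow_sub_pow_le_prod_add_sub_prod_add univ (fun i _ ↦ hμ i) zero_le_one hα_inv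
  rw [card_univ, Fintype.card_fin, one_pow] at hprod
  rw [hpow, hdet, ← one_smul ℝ Ss, hdet, one_smul, ← mul_sub, mul_comm _ Ss.det]
  exact ⟨mul_le_mul_of_nonneg_left hprod hSs.det_pos.le,
    mul_nonneg hSs.det_pos.le (sub_nonneg.2 (one_le_pow₀ hα_inv))⟩

/-- For every `α ∈ (0,1]`,
`det(Σ_L + α⁻¹ Σ_*) − det(Σ_L + Σ_*) ≥ (α^(−p) − 1) det(Σ_*) ≥ 0`. -/
theorem det_difference_lower_bound
    (p : ℕ) (hp : 0 < p)
    (SL Ss : Matrix (Fin p) (Fin p) ℝ) (hSL : SL.PosDef) (hSs : Ss.PosDef)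
    (α : ℝ) (hα : α ∈ Set.Ioc (0:ℝ) 1) :
    (α ^ (-(p : ℝ)) - 1) * Ss.det ≤ (SL + α⁻¹ • Ss).det - (SL + Ss).det ∧
    0 ≤ (α ^ (-(p : ℝ)) - 1) * Ss.det :=
  det_difference_lower_bound_general p SL Ss hSL hSs α hα
end

section
/- The function κ is differentiable at every α ∈ (0,1) with derivative κ′(α) = −(n/(2α²))·κ(α)·tr((Σ_L + α⁻¹Σ_*)⁻¹ Σ_*), this derivative is strictly negative, and consequently κ is strictly decreasing on (0,1). -/
/-!
With `A = Σ_L + α⁻¹Σ_*` one has `Σ_L + β⁻¹Σ_* = A (1 + (β⁻¹ - α⁻¹) A⁻¹Σ_*)`, and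
`r ↦ det (1 + r M)` has derivative `tr M` at `0` (its Taylor expansion starts `1 + tr M · r`);
the chain rule through `β ↦ β⁻¹` and the power `n/2` gives `κ′`. The trace `tr (A⁻¹Σ_*)` is
positive: writing `Σ_* = Yᴴ Y` with `Y` invertible, it is the trace of the positive definite
matrix `Y A⁻¹ Yᴴ`. A negative derivative on `(0, ∞)` makes `κ` strictly decreasing there.
-/

open Matrix Polynomial

namespace Matrix

variable {ι 𝕜 : Type*} [Fintype ι] [DecidableEq ι]

open scoped ComplexOrder MatrixOrder in
theorem PosDef.trace_mul_pos [RCLike 𝕜] [Nonempty ι] {A B : Matrix ι ι 𝕜}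
    (hA : A.PosDef) (hB : B.PosDef) : 0 < (A * B).trace := by
  obtain ⟨y, hy, rfl⟩ := CStarAlgebra.isStrictlyPositive_iff_eq_star_mul_self.mp
    hB.isStrictlyPositive
  rw [star_eq_conjTranspose, ← Matrix.mul_assoc, trace_mul_comm, ← Matrix.mul_assoc]
  exact (hA.mul_mul_conjTranspose_same (vecMul_injective_of_isUnit hy)).trace_pos

theorem hasDerivAt_det_one_add_smul [NontriviallyNormedField 𝕜] (M : Matrix ι ι 𝕜) :
    HasDerivAt (fun r : 𝕜 => (1 + r • M).det) M.trace 0 := by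
  set q := (det (1 + (X : 𝕜[X]) • M.map C)).divX.divX
  have hexpand : (fun r : 𝕜 => (1 + r • M).det) = fun r => 1 + M.trace * r + q.eval r * r ^ 2 :=
    funext fun r => det_one_add_smul r M
  rw [hexpand]
  simpa using (((hasDerivAt_id (0 : 𝕜)).const_mul M.trace).const_add 1).fun_add
    ((q.hasDerivAt 0).fun_mul (hasDerivAt_pow 2 (0 : 𝕜)))

theorem hasDerivAt_det_add_smul [NontriviallyNormedField 𝕜] {A : Matrix ι ι 𝕜} (hA : IsUnit A)
    (N : Matrix ι ι 𝕜) :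
    HasDerivAt (fun r : 𝕜 => (A + r • N).det) (A.det * (A⁻¹ * N).trace) 0 := by
  have hfactor : (fun r : 𝕜 => (A + r • N).det) = fun r => A.det * (1 + r • (A⁻¹ * N)).det := by
    ext r
    rw [← det_mul, Matrix.mul_add, Matrix.mul_one, Matrix.mul_smul, ← Matrix.mul_assoc,
      mul_nonsing_inv _ ((isUnit_iff_isUnit_det A).mp hA), Matrix.one_mul]
  rw [hfactor]
  exact (hasDerivAt_det_one_add_smul _).const_mul _

theorem hasDerivAt_det_add_inv_smul [NontriviallyNormedField 𝕜] {A B : Matrix ι ι 𝕜} {x : 𝕜}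
    (hx : x ≠ 0) (hA : IsUnit (A + x⁻¹ • B)) :
    HasDerivAt (fun y : 𝕜 => (A + y⁻¹ • B).det)
      (-(x ^ 2)⁻¹ * ((A + x⁻¹ • B).det * ((A + x⁻¹ • B)⁻¹ * B).trace)) x := by
  have hshift : (fun y : 𝕜 => (A + y⁻¹ • B).det)
      = (fun r => (A + x⁻¹ • B + r • B).det) ∘ fun y => y⁻¹ - x⁻¹ := by
    ext y
    simp only [Function.comp_apply, sub_smul]
    abel_nf
  have hinner : HasDerivAt (fun y : 𝕜 => y⁻¹ - x⁻¹) (-(x ^ 2)⁻¹) x :=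
    (hasDerivAt_inv hx).sub_const x⁻¹
  rw [hshift, mul_comm]
  exact HasDerivAt.comp x (by simpa using hasDerivAt_det_add_smul hA B) hinner

end Matrix

theorem HasDerivAt.rpow_const_of_eq_mul {f : ℝ → ℝ} {x g : ℝ} (r : ℝ)
    (hf : HasDerivAt f (f x * g) x) (hx : 0 < f x) :
    HasDerivAt (fun y => f y ^ r) (r * g * f x ^ r) x := by
  refine (hf.rpow_const (Or.inl hx.ne')).congr_deriv ?_
  rw [Real.rpow_sub_one hx.ne']
  field_simp

section Kappa

variable {ι : Type*} [Fintype ι] [DecidableEq ι] {n : ℕ} {SL Ss : Matrix ι ι ℝ}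

noncomputable def kappa (n : ℕ) (SL Ss : Matrix ι ι ℝ) (α : ℝ) : ℝ :=
  (SL + α⁻¹ • Ss).det ^ ((n : ℝ) / 2) / (SL + Ss).det ^ ((n : ℝ) / 2)

theorem kappa_pos (hSL : SL.PosDef) (hSs : Ss.PosDef) {α : ℝ} (hα : 0 < α) :
    0 < kappa n SL Ss α :=
  div_pos (Real.rpow_pos_of_pos (hSL.add (hSs.smul (inv_pos.2 hα))).det_pos _)
    (Real.rpow_pos_of_pos (hSL.add hSs).det_pos _)

theorem hasDerivAt_kappa (hSL : SL.PosDef) (hSs : Ss.PosDef) {α : ℝ} (hα : 0 < α) :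
    HasDerivAt (kappa n SL Ss)
      (-((n : ℝ) / (2 * α ^ 2)) * kappa n SL Ss α * ((SL + α⁻¹ • Ss)⁻¹ * Ss).trace) α := by
  have hA : (SL + α⁻¹ • Ss).PosDef := hSL.add (hSs.smul (inv_pos.2 hα))
  have hdet := hasDerivAt_det_add_inv_smul hα.ne' hA.isUnit
  rw [mul_left_comm] at hdet
  refine ((hdet.rpow_const_of_eq_mul ((n : ℝ) / 2) hA.det_pos).div_const _).congr_deriv ?_
  unfold kappa
  field_simp

theorem kappa_deriv_neg [Nonempty ι] (hn : 0 < n) (hSL : SL.PosDef) (hSs : Ss.PosDef) {α : ℝ}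
    (hα : 0 < α) :
    -((n : ℝ) / (2 * α ^ 2)) * kappa n SL Ss α * ((SL + α⁻¹ • Ss)⁻¹ * Ss).trace < 0 := by
  have htrace : 0 < ((SL + α⁻¹ • Ss)⁻¹ * Ss).trace :=
    (hSL.add (hSs.smul (inv_pos.2 hα))).inv.trace_mul_pos hSs
  rw [neg_mul, neg_mul, neg_lt_zero]
  exact mul_pos (mul_pos (by positivity) (kappa_pos hSL hSs hα)) htrace

theorem kappa_strictAntiOn [Nonempty ι] (hn : 0 < n) (hSL : SL.PosDef) (hSs : Ss.PosDef) :
    StrictAntiOn (kappa n SL Ss) (Set.Ioi 0) :=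
  strictAntiOn_of_hasDerivWithinAt_neg (convex_Ioi 0)
    (fun α hα => (hasDerivAt_kappa hSL hSs hα).continuousAt.continuousWithinAt)
    (fun α hα => (hasDerivAt_kappa hSL hSs (by rwa [interior_Ioi] at hα)).hasDerivWithinAt)
    (fun α hα => kappa_deriv_neg hn hSL hSs (by rwa [interior_Ioi] at hα))

end Kappa

/-- `κ` is differentiable on `(0,1)` with derivative
`κ′(α) = −(n/(2α²)) κ(α) tr((Σ_L + α⁻¹Σ_*)⁻¹ Σ_*)`, this derivative is strictly
negative, and consequently `κ` is strictly decreasing on `(0,1)`. -/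
theorem kappa_deriv_neg_strictAnti
    (p n : ℕ) (hp : 0 < p) (hn : 0 < n)
    (SL Ss : Matrix (Fin p) (Fin p) ℝ) (hSL : SL.PosDef) (hSs : Ss.PosDef) :
    (∀ α ∈ Set.Ioo (0:ℝ) 1,
      HasDerivAt
        (fun β : ℝ => (SL + β⁻¹ • Ss).det ^ ((n : ℝ) / 2) / (SL + Ss).det ^ ((n : ℝ) / 2))
        (-((n : ℝ) / (2 * α ^ 2)) *
          ((SL + α⁻¹ • Ss).det ^ ((n : ℝ) / 2) / (SL + Ss).det ^ ((n : ℝ) / 2)) *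
          Matrix.trace ((SL + α⁻¹ • Ss)⁻¹ * Ss)) α ∧
      -((n : ℝ) / (2 * α ^ 2)) *
          ((SL + α⁻¹ • Ss).det ^ ((n : ℝ) / 2) / (SL + Ss).det ^ ((n : ℝ) / 2)) *
          Matrix.trace ((SL + α⁻¹ • Ss)⁻¹ * Ss) < 0) ∧
    StrictAntiOn
      (fun β : ℝ => (SL + β⁻¹ • Ss).det ^ ((n : ℝ) / 2) / (SL + Ss).det ^ ((n : ℝ) / 2))
      (Set.Ioo (0:ℝ) 1) := by
  have : Nonempty (Fin p) := ⟨⟨0, hp⟩⟩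
  exact ⟨fun α hα => ⟨hasDerivAt_kappa hSL hSs hα.1, kappa_deriv_neg hn hSL hSs hα.1⟩,
    (kappa_strictAntiOn hn hSL hSs).mono Set.Ioo_subset_Ioi_self⟩
end

section
/- The Bayes factor H is differentiable at every α ∈ (0,1) with derivative H′(α) = (H(α)/(2α))·tr(−n·B̃(α)⁻¹Σ_* + α·Υ(α)·Ã + α(1−α)·Υ(α)·Σ_L·B̃(α)⁻¹·Ã), where Ã = (Y − M_*)V⁻¹(Y − M_*)ᵀ, B̃(α) = αΣ_L + Σ_*, and Υ(α) = (Σ_L + Σ_*)⁻¹ Σ_* B̃(α)⁻¹. -/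
/-!
For `β ≠ 0`, `(Σ_L + β⁻¹Σ_*)⁻¹ = β (βΣ_L + Σ_*)⁻¹`, so the exponent of `H(β)` is
`-(1 - β)/2 · tr(Υ(β) Ã)`. Writing `H = D^{n/2}/c · exp E` with `D(β) = det(Σ_L + β⁻¹Σ_*)`
and `c` constant, `H' = H · ((n/2) D'/D + E')`. Jacobi's formula
`(det(A + sB))' = det(A + sB) tr((A + sB)⁻¹B)`, composed with `β ↦ β⁻¹`, gives
`D'/D = -α⁻¹ tr(B̃(α)⁻¹Σ_*)`, and `((A + sB)⁻¹)' = -(A + sB)⁻¹B(A + sB)⁻¹` gives `E'`.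
-/

open Matrix

section Jacobi

variable {𝕜 : Type*} [NontriviallyNormedField 𝕜] {m : Type*} [Fintype m] [DecidableEq m]

theorem Matrix.hasDerivAt_det_one_add_smul_s9 (M : Matrix m m 𝕜) :
    HasDerivAt (fun t : 𝕜 => (1 + t • M).det) M.trace 0 := by
  have h := (det (1 + (Polynomial.X : Polynomial 𝕜) • M.map Polynomial.C)).hasDerivAt 0
  rw [derivative_det_one_add_X_smul] at h
  convert h using 1
  funext t
  simp [eval_det, ← smul_eq_mul_diagonal]

theorem Matrix.hasDerivAt_det_add_smul_s9 {A B : Matrix m m 𝕜} {t : 𝕜}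
    (h : IsUnit (A + t • B).det) :
    HasDerivAt (fun s => (A + s • B).det) ((A + t • B).det * trace ((A + t • B)⁻¹ * B)) t := by
  have hfactor : (fun s => (A + s • B).det) =
      fun s => (A + t • B).det * (1 + (s - t) • ((A + t • B)⁻¹ * B)).det := by
    funext s
    rw [← det_mul, Matrix.mul_add, Matrix.mul_one, Matrix.mul_smul, ← Matrix.mul_assoc,
      mul_nonsing_inv _ h, Matrix.one_mul, sub_smul]
    congr 1
    abel
  have h0 := hasDerivAt_det_one_add_smul_s9 ((A + t • B)⁻¹ * B)
  rw [← sub_self t] at h0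
  rw [hfactor]
  exact (h0.comp_sub_const t t).const_mul _

end Jacobi

section MatrixValued

variable {𝕜 : Type*} [RCLike 𝕜] {m : Type*} [Fintype m] [DecidableEq m]

attribute [local instance] Matrix.linftyOpNormedRing Matrix.linftyOpNormedAlgebra

theorem HasDerivAt.matrix_inv {f : 𝕜 → Matrix m m 𝕜} {f' : Matrix m m 𝕜} {x : 𝕜}
    (hf : HasDerivAt f f' x) (hx : IsUnit (f x).det) :
    HasDerivAt (fun y => (f y)⁻¹) (-((f x)⁻¹ * f' * (f x)⁻¹)) x := by
  have hu : IsUnit (f x) := (isUnit_iff_isUnit_det _).2 hx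
  have hF := hasFDerivAt_ringInverse (𝕜 := 𝕜) hu.unit
  rw [hu.unit_spec] at hF
  have h := hF.comp_hasDerivAt x hf
  simp only [Function.comp_def, ← Matrix.nonsing_inv_eq_ringInverse, Matrix.coe_units_inv,
    hu.unit_spec] at h
  exact h

theorem HasDerivAt.matrix_trace {f : 𝕜 → Matrix m m 𝕜} {f' : Matrix m m 𝕜} {x : 𝕜}
    (hf : HasDerivAt f f' x) : HasDerivAt (fun y => (f y).trace) f'.trace x :=
  (traceLinearMap m 𝕜 𝕜).toContinuousLinearMap.hasFDerivAt.comp_hasDerivAt x hf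

theorem Matrix.hasDerivAt_trace_mul_inv_smul_add_mul {A B C D : Matrix m m 𝕜} {t : 𝕜}
    (h : IsUnit (t • A + B).det) :
    HasDerivAt (fun x => trace (C * (x • A + B)⁻¹ * D))
      (-trace (C * (t • A + B)⁻¹ * A * (t • A + B)⁻¹ * D)) t := by
  have hline : HasDerivAt (fun x => x • A + B) A t := by
    have h := ((hasDerivAt_id t).smul_const A).add_const B
    rwa [one_smul] at h
  simpa [Matrix.mul_assoc] using (((hline.matrix_inv h).const_mul C).mul_const D).matrix_trace

end MatrixValued

section Reparametrization

variable {K : Type*} [Field K] {m : Type*} [Fintype m] [DecidableEq m]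

theorem Matrix.inv_add_inv_smul {x : K} (hx : x ≠ 0) (A B : Matrix m m K) :
    (A + x⁻¹ • B)⁻¹ = x • (x • A + B)⁻¹ := by
  have hscale : A + x⁻¹ • B = x⁻¹ • (x • A + B) := by
    rw [smul_add, smul_smul, inv_mul_cancel₀ hx, one_smul]
  rw [hscale]
  by_cases h : IsUnit (x • A + B).det
  · have : Invertible x⁻¹ := invertibleOfNonzero (inv_ne_zero hx)
    rw [inv_smul _ _ h, invOf_eq_inv, inv_inv]
  · have h' : ¬IsUnit (x⁻¹ • (x • A + B)).det := by
      rw [det_smul, IsUnit.mul_iff, not_and_or]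
      exact Or.inr h
    rw [nonsing_inv_apply_not_isUnit _ h, nonsing_inv_apply_not_isUnit _ h', smul_zero]

theorem Matrix.trace_inv_sub_one_smul_mul_inv_add_inv_smul {x : K} (hx : x ≠ 0)
    (A B C D : Matrix m m K) :
    trace ((x⁻¹ - 1) • (C * (A + x⁻¹ • B)⁻¹) * D) = (1 - x) * trace (C * (x • A + B)⁻¹ * D) := by
  rw [inv_add_inv_smul hx, Matrix.mul_smul, smul_smul, Matrix.smul_mul, trace_smul, smul_eq_mul]
  congr 1
  field_simp

end Reparametrization

theorem Matrix.hasDerivAt_det_add_inv_smul_s9 {𝕜 : Type*} [NontriviallyNormedField 𝕜] {m : Type*}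
    [Fintype m] [DecidableEq m] {A B : Matrix m m 𝕜} {t : 𝕜} (ht : t ≠ 0)
    (h : IsUnit (A + t⁻¹ • B).det) :
    HasDerivAt (fun x => (A + x⁻¹ • B).det)
      ((A + t⁻¹ • B).det * -(t⁻¹ * trace ((t • A + B)⁻¹ * B))) t := by
  refine ((hasDerivAt_det_add_smul_s9 h).comp t (hasDerivAt_inv ht)).congr_deriv ?_
  rw [inv_add_inv_smul ht, Matrix.smul_mul, trace_smul, smul_eq_mul]
  field_simp

theorem HasDerivAt.rpow_div_const_mul_exp {f E : ℝ → ℝ} {f' E' x : ℝ}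
    (hf : HasDerivAt f (f x * f') x) (hfx : f x ≠ 0) (hE : HasDerivAt E E' x) (r c : ℝ) :
    HasDerivAt (fun y => f y ^ r / c * Real.exp (E y))
      (f x ^ r / c * Real.exp (E x) * (r * f' + E')) x := by
  refine (((hf.rpow_const (p := r) (Or.inl hfx)).div_const c).mul hE.exp).congr_deriv ?_
  rw [Real.rpow_sub_one hfx]
  field_simp

theorem bf_hasDerivAt_general
    (p n : ℕ)
    (SL Ss : Matrix (Fin p) (Fin p) ℝ) (hSL : SL.PosDef) (hSs : Ss.PosDef)
    (V : Matrix (Fin n) (Fin n) ℝ)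
    (Y M : Matrix (Fin p) (Fin n) ℝ)
    (α : ℝ) (hα : α ∈ Set.Ioo (0:ℝ) 1) :
    HasDerivAt
      (fun β : ℝ =>
        (SL + β⁻¹ • Ss).det ^ ((n : ℝ) / 2) / (SL + Ss).det ^ ((n : ℝ) / 2) *
          Real.exp (-(1 / 2) * Matrix.trace
            (((β⁻¹ - 1) • ((SL + Ss)⁻¹ * Ss * (SL + β⁻¹ • Ss)⁻¹)) *
              (Y - M) * V⁻¹ * (Y - M)ᵀ)))
      (((SL + α⁻¹ • Ss).det ^ ((n : ℝ) / 2) / (SL + Ss).det ^ ((n : ℝ) / 2) *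
          Real.exp (-(1 / 2) * Matrix.trace
            (((α⁻¹ - 1) • ((SL + Ss)⁻¹ * Ss * (SL + α⁻¹ • Ss)⁻¹)) *
              (Y - M) * V⁻¹ * (Y - M)ᵀ))) / (2 * α) *
        Matrix.trace
          ((-(n : ℝ)) • ((α • SL + Ss)⁻¹ * Ss) +
            α • ((SL + Ss)⁻¹ * Ss * (α • SL + Ss)⁻¹ *
              ((Y - M) * V⁻¹ * (Y - M)ᵀ)) +
            (α * (1 - α)) • ((SL + Ss)⁻¹ * Ss * (α • SL + Ss)⁻¹ * SL *
              (α • SL + Ss)⁻¹ * ((Y - M) * V⁻¹ * (Y - M)ᵀ))))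
      α := by
  have hα0 : 0 < α := hα.1
  have hB : IsUnit (α • SL + Ss).det := ((hSL.smul hα0).add hSs).det_pos.ne'.isUnit
  have hD : (SL + α⁻¹ • Ss).det ≠ 0 := (hSL.add (hSs.smul (inv_pos.2 hα0))).det_pos.ne'
  set C := (SL + Ss)⁻¹ * Ss
  set A := (Y - M) * V⁻¹ * (Y - M)ᵀ
  have hexp : HasDerivAt (fun β => -(1 / 2) * ((1 - β) * trace (C * (β • SL + Ss)⁻¹ * A)))
      (-(1 / 2) * (-trace (C * (α • SL + Ss)⁻¹ * A) -
        (1 - α) * trace (C * (α • SL + Ss)⁻¹ * SL * (α • SL + Ss)⁻¹ * A))) α :=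
    ((((hasDerivAt_id' α).const_sub 1).mul
      (hasDerivAt_trace_mul_inv_smul_add_mul hB)).const_mul _).congr_deriv (by ring)
  have hH := (hasDerivAt_det_add_inv_smul_s9 hα0.ne' hD.isUnit).rpow_div_const_mul_exp hD hexp
    ((n : ℝ) / 2) ((SL + Ss).det ^ ((n : ℝ) / 2))
  have hreparam : ∀ β ≠ 0, trace (((β⁻¹ - 1) • (C * (SL + β⁻¹ • Ss)⁻¹)) *
      (Y - M) * V⁻¹ * (Y - M)ᵀ) = (1 - β) * trace (C * (β • SL + Ss)⁻¹ * A) := by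
    intro β hβ
    rw [← trace_inv_sub_one_smul_mul_inv_add_inv_smul hβ]
    simp only [A, Matrix.mul_assoc]
  refine (hH.congr_of_eventuallyEq ?_).congr_deriv ?_
  · filter_upwards [eventually_ne_nhds hα0.ne'] with β hβ
    rw [hreparam β hβ]
  · rw [hreparam α hα0.ne', trace_add, trace_add, trace_smul, trace_smul, trace_smul]
    simp only [smul_eq_mul]
    field_simp
    ring

/-- The Bayes factor `H` is differentiable on `(0,1)` with derivative
`H′(α) = (H(α)/(2α)) tr(−n B̃(α)⁻¹Σ_* + α Υ(α) Ã + α(1−α) Υ(α) Σ_L B̃(α)⁻¹ Ã)`,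
where `Ã = (Y − M_*)V⁻¹(Y − M_*)ᵀ`, `B̃(α) = αΣ_L + Σ_*`, and
`Υ(α) = (Σ_L + Σ_*)⁻¹ Σ_* B̃(α)⁻¹`. -/
theorem bf_hasDerivAt
    (p n : ℕ) (hp : 0 < p) (hn : 0 < n)
    (SL Ss : Matrix (Fin p) (Fin p) ℝ) (hSL : SL.PosDef) (hSs : Ss.PosDef)
    (V : Matrix (Fin n) (Fin n) ℝ) (hV : V.PosDef)
    (Y M : Matrix (Fin p) (Fin n) ℝ)
    (α : ℝ) (hα : α ∈ Set.Ioo (0:ℝ) 1) :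
    HasDerivAt
      (fun β : ℝ =>
        (SL + β⁻¹ • Ss).det ^ ((n : ℝ) / 2) / (SL + Ss).det ^ ((n : ℝ) / 2) *
          Real.exp (-(1 / 2) * Matrix.trace
            (((β⁻¹ - 1) • ((SL + Ss)⁻¹ * Ss * (SL + β⁻¹ • Ss)⁻¹)) *
              (Y - M) * V⁻¹ * (Y - M)ᵀ)))
      (((SL + α⁻¹ • Ss).det ^ ((n : ℝ) / 2) / (SL + Ss).det ^ ((n : ℝ) / 2) *
          Real.exp (-(1 / 2) * Matrix.trace
            (((α⁻¹ - 1) • ((SL + Ss)⁻¹ * Ss * (SL + α⁻¹ • Ss)⁻¹)) *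
              (Y - M) * V⁻¹ * (Y - M)ᵀ))) / (2 * α) *
        Matrix.trace
          ((-(n : ℝ)) • ((α • SL + Ss)⁻¹ * Ss) +
            α • ((SL + Ss)⁻¹ * Ss * (α • SL + Ss)⁻¹ *
              ((Y - M) * V⁻¹ * (Y - M)ᵀ)) +
            (α * (1 - α)) • ((SL + Ss)⁻¹ * Ss * (α • SL + Ss)⁻¹ * SL *
              (α • SL + Ss)⁻¹ * ((Y - M) * V⁻¹ * (Y - M)ᵀ))))
      α :=
  bf_hasDerivAt_general p n SL Ss hSL hSs V Y M α hα
end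

section
/- For every real c > 0, ∫₀¹ sqrt((αc+1)/(α(c+1))) dα = 1 + (1/(2·sqrt(c(c+1))))·log((sqrt(c+1)+sqrt(c))/(sqrt(c+1)−sqrt(c))). -/
/-!
Since `(αc + 1)/(α(c + 1)) = ((αc + 1)/α)/(c + 1)`, it suffices to integrate `√((αc + 1)/α)`.
This has the elementary primitive `√(α(αc + 1)) + arsinh (√(cα)) / √c`, which is continuous at
`0`, so the fundamental theorem of calculus applies to the improper integral; integrability is
automatic because the integrand is nonnegative. The logarithm in the closed form is
`2 arsinh √c`, because `(√(c+1) + √c)(√(c+1) - √c) = 1`.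
-/

open MeasureTheory Real Set

theorem hasDerivAt_sqrt_mul_add_arsinh {c x : ℝ} (hc : 0 < c) (hx : 0 < x) :
    HasDerivAt (fun y => √(y * (y * c + 1)) + arsinh √(c * y) / √c)
      (√((x * c + 1) / x)) x := by
  have hg := ((hasDerivAt_id x).mul (((hasDerivAt_id x).mul_const c).add_const 1)).sqrt
    (by positivity : x * (x * c + 1) ≠ 0)
  have hh := (hasDerivAt_arsinh _).comp x
    (((hasDerivAt_id x).const_mul c).sqrt (by positivity : c * x ≠ 0))
  refine (hg.add (hh.div_const √c)).congr_deriv ?_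
  have hsx : 0 < √x := sqrt_pos.2 hx
  have hsc : 0 < √c := sqrt_pos.2 hc
  have hc' : √c ^ 2 = c := sq_sqrt hc.le
  have hb' : √(x * c + 1) ^ 2 = x * c + 1 := sq_sqrt (by positivity)
  simp only [id, Pi.mul_apply, one_mul, mul_one]
  rw [sq_sqrt (by positivity), show 1 + c * x = x * c + 1 by ring, sqrt_mul hx.le,
    sqrt_mul hc.le, sqrt_div' _ hx.le]
  field_simp
  linear_combination (-2 * √c ^ 2) * hb' - hc'

theorem integral_sqrt_mul_add_one_div {b c : ℝ} (hc : 0 < c) (hb : 0 ≤ b) :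
    ∫ x in 0..b, √((x * c + 1) / x) = √(b * (b * c + 1)) + arsinh √(c * b) / √c := by
  have hcont : ContinuousOn (fun y => √(y * (y * c + 1)) + arsinh √(c * y) / √c) (Icc 0 b) := by
    have := continuous_arsinh
    fun_prop
  have hderiv : ∀ x ∈ Ioo 0 b, HasDerivAt (fun y => √(y * (y * c + 1)) + arsinh √(c * y) / √c)
      (√((x * c + 1) / x)) x := fun x hx => hasDerivAt_sqrt_mul_add_arsinh hc hx.1
  rw [intervalIntegral.integral_eq_sub_of_hasDerivAt_of_le hb hcont hderiv
    (intervalIntegral.intervalIntegrable_deriv_of_nonneg (by rwa [uIcc_of_le hb])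
      (by simpa [hb] using hderiv) fun _ _ => sqrt_nonneg _)]
  simp

theorem two_mul_arsinh_sqrt {c : ℝ} (hc : 0 ≤ c) :
    2 * arsinh √c = log ((√(c + 1) + √c) / (√(c + 1) - √c)) := by
  have hc' : √c ^ 2 = c := sq_sqrt hc
  have hd' : √(c + 1) ^ 2 = c + 1 := sq_sqrt (by positivity)
  have hlt : √c < √(c + 1) := sqrt_lt_sqrt hc (lt_add_one c)
  have hratio : (√(c + 1) + √c) / (√(c + 1) - √c) = (√c + √(1 + √c ^ 2)) ^ 2 := by
    rw [div_eq_iff (sub_pos.2 hlt).ne', hc', add_comm 1 c]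
    linear_combination -(√(c + 1) + √c) * (hd' - hc')
  rw [hratio, log_pow, arsinh]
  push_cast
  ring

/-- For every real `c > 0`,
`∫₀¹ √((αc+1)/(α(c+1))) dα = 1 + (1/(2√(c(c+1)))) log((√(c+1)+√c)/(√(c+1)−√c))`. -/
theorem integral_sqrt_ratio (c : ℝ) (hc : 0 < c) :
    (∫ α in Set.Ioo (0:ℝ) 1, Real.sqrt ((α * c + 1) / (α * (c + 1)))) =
      1 + (1 / (2 * Real.sqrt (c * (c + 1)))) *
        Real.log ((Real.sqrt (c + 1) + Real.sqrt c) / (Real.sqrt (c + 1) - Real.sqrt c)) := by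
  have hc1 : 0 < c + 1 := by linarith
  have hsplit : ∀ α : ℝ, √((α * c + 1) / (α * (c + 1))) = √((α * c + 1) / α) / √(c + 1) :=
    fun α => by rw [← div_div, sqrt_div' _ hc1.le]
  simp_rw [hsplit, ← two_mul_arsinh_sqrt hc.le, integral_div, ← integral_Ioc_eq_integral_Ioo,
    ← intervalIntegral.integral_of_le zero_le_one, integral_sqrt_mul_add_one_div hc zero_le_one,
    sqrt_mul hc.le]
  have hsc : 0 < √c := sqrt_pos.2 hc
  have hsc1 : 0 < √(c + 1) := sqrt_pos.2 hc1
  field_simp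
  ring_nf
end

section
/- If a > np/2 and b > 0, then the integrated Bayes factor ∫₀¹ H(α)·(1/B(a,b))·α^(a−1)(1−α)^(b−1) dα is finite, where B(a,b) is the Euler Beta function and the weight is the Beta(a,b) density on (0,1). -/
/-!
Since `Σ_L + α⁻¹Σ_* = α⁻¹(αΣ_L + Σ_*)`, we get
`κ(α) = α^(-np/2) det(αΣ_L + Σ_*)^(n/2) / det(Σ_L + Σ_*)^(n/2)`, and the resolvent-type identity
`A⁻¹ - B⁻¹ = A⁻¹(B - A)B⁻¹` gives `Σ_H(α)⁻¹ = (Σ_L + Σ_*)⁻¹ - α(αΣ_L + Σ_*)⁻¹`.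
Apart from the factor `α^(-np/2)`, the integrand is therefore a function continuous on `[0, 1]`,
hence bounded, times `α^(a-1)(1-α)^(b-1)`; so it is dominated by a multiple of the Beta integrand
`α^(a-np/2-1)(1-α)^(b-1)`, which is integrable because `a - np/2 > 0` and `b > 0`.
-/

open Matrix MeasureTheory Set

theorem add_inv_smul_eq_inv_smul_smul_add {K M : Type*} [DivisionRing K] [AddCommGroup M]
    [Module K M] {α : K} (hα : α ≠ 0) (x y : M) : x + α⁻¹ • y = α⁻¹ • (α • x + y) := by
  rw [smul_add, smul_smul, inv_mul_cancel₀ hα, one_smul]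

theorem integrableOn_Ioo_rpow_mul_one_sub_rpow {u v : ℝ} (hu : 0 < u) (hv : 0 < v) :
    IntegrableOn (fun x : ℝ => x ^ (u - 1) * (1 - x) ^ (v - 1)) (Ioo 0 1) := by
  have h := Complex.betaIntegral_convergent (u := u) (v := v) (by simpa) (by simpa)
  rw [intervalIntegrable_iff, uIoc_of_le zero_le_one] at h
  refine IntegrableOn.congr_fun (h.mono_set Ioo_subset_Ioc_self).norm (fun x hx => ?_)
    measurableSet_Ioo
  have hx' : 0 < 1 - x := sub_pos.2 hx.2
  have hcast : (1 : ℂ) - x = ((1 - x : ℝ) : ℂ) := by push_cast; rfl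
  rw [norm_mul, hcast, Complex.norm_cpow_eq_rpow_re_of_pos hx.1,
    Complex.norm_cpow_eq_rpow_re_of_pos hx']
  simp

theorem ContinuousOn.matrix_inv {X 𝕜 ι : Type*} [TopologicalSpace X] [NormedField 𝕜]
    [Fintype ι] [DecidableEq ι] {A : X → Matrix ι ι 𝕜} {s : Set X} (hA : ContinuousOn A s)
    (h : ∀ x ∈ s, (A x).det ≠ 0) : ContinuousOn (fun x => (A x)⁻¹) s := by
  intro x hx
  have hdet : ContinuousAt Ring.inverse (A x).det := by
    simpa only [Ring.inverse_eq_inv'] using continuousAt_inv₀ (h x hx)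
  exact (continuousAt_matrix_inv _ hdet).comp_continuousWithinAt (hA x hx)

namespace Matrix

variable {ι : Type*} [Fintype ι] [DecidableEq ι]

theorem det_add_inv_smul_rpow {S T : Matrix ι ι ℝ} {α : ℝ} (hα : 0 < α)
    (h : 0 ≤ (α • S + T).det) (r : ℝ) :
    (S + α⁻¹ • T).det ^ r = α ^ (-(Fintype.card ι * r)) * (α • S + T).det ^ r := by
  rw [add_inv_smul_eq_inv_smul_smul_add hα.ne', det_smul, Real.mul_rpow (by positivity) h,
    ← Real.rpow_natCast, Real.inv_rpow hα.le, ← Real.rpow_neg hα.le, ← Real.rpow_mul hα.le, neg_mul]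

theorem sub_one_smul_inv_mul_mul_inv_eq_inv_sub_smul_inv {K : Type*} [Field K]
    {S T : Matrix ι ι K} {α : K} (hα : α ≠ 0) (hST : IsUnit (S + T).det)
    (hαST : IsUnit (α • S + T).det) :
    (α⁻¹ - 1) • ((S + T)⁻¹ * T * (S + α⁻¹ • T)⁻¹) = (S + T)⁻¹ - α • (α • S + T)⁻¹ := by
  have hscale := add_inv_smul_eq_inv_smul_smul_add hα S T
  have hunit : IsUnit (S + α⁻¹ • T).det := by
    rw [hscale, det_smul]
    exact (isUnit_iff_ne_zero.2 (pow_ne_zero _ (inv_ne_zero hα))).mul hαST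
  have hinv : (S + α⁻¹ • T)⁻¹ = α • (α • S + T)⁻¹ := by
    let := invertibleOfNonzero (inv_ne_zero hα)
    rw [hscale, Matrix.inv_smul _ _ hαST, invOf_eq_inv, inv_inv]
  have hdiff : (S + α⁻¹ • T) - (S + T) = (α⁻¹ - 1) • T := by
    rw [sub_smul, one_smul]; abel
  rw [← hinv, Matrix.inv_sub_inv (by simp only [isUnit_iff_isUnit_det, hST, hunit]), hdiff,
    Matrix.mul_smul, Matrix.smul_mul]

theorem continuousOn_det_rpow_mul_exp_trace {m : Type*} [Fintype m] {S T : Matrix ι ι ℝ}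
    (hS : S.PosSemidef) (hT : T.PosDef) {r : ℝ} (hr : 0 ≤ r) (W : Matrix ι m ℝ)
    (U : Matrix m m ℝ) :
    ContinuousOn (fun t : ℝ => (t • S + T).det ^ r *
      Real.exp (-(1 / 2) * trace (((S + T)⁻¹ - t • (t • S + T)⁻¹) * W * U * Wᵀ))) (Ici 0) := by
  have hdet : Continuous fun t : ℝ => (t • S + T).det ^ r :=
    (Real.continuous_rpow_const hr).comp (by fun_prop)
  have hinv : ContinuousOn (fun t : ℝ => (t • S + T)⁻¹) (Ici 0) :=
    ContinuousOn.matrix_inv (by fun_prop) fun t ht =>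
      (PosDef.posSemidef_add (hS.smul ht) hT).det_pos.ne'
  have hexp : Continuous fun X : Matrix ι ι ℝ =>
      Real.exp (-(1 / 2) * trace (X * W * U * Wᵀ)) := by
    fun_prop
  exact hdet.continuousOn.mul
    (hexp.comp_continuousOn (continuousOn_const.sub (continuousOn_id.smul hinv)))

end Matrix

theorem integrated_bf_integrable_general
    (p n : ℕ)
    (SL Ss : Matrix (Fin p) (Fin p) ℝ) (hSL : SL.PosDef) (hSs : Ss.PosDef)
    (V : Matrix (Fin n) (Fin n) ℝ)
    (Y M : Matrix (Fin p) (Fin n) ℝ)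
    (a b : ℝ) (ha : (n : ℝ) * p / 2 < a) (hb : 0 < b) :
    IntegrableOn
      (fun α : ℝ =>
        ((SL + α⁻¹ • Ss).det ^ ((n : ℝ) / 2) / (SL + Ss).det ^ ((n : ℝ) / 2) *
            Real.exp (-(1 / 2) * Matrix.trace
              (((α⁻¹ - 1) • ((SL + Ss)⁻¹ * Ss * (SL + α⁻¹ • Ss)⁻¹)) *
                (Y - M) * V⁻¹ * (Y - M)ᵀ))) *
          ((1 / ∫ x in Set.Ioo (0:ℝ) 1, x ^ (a - 1) * (1 - x) ^ (b - 1)) *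
            α ^ (a - 1) * (1 - α) ^ (b - 1)))
      (Set.Ioo (0:ℝ) 1) := by
  generalize 1 / ∫ x in Set.Ioo (0:ℝ) 1, x ^ (a - 1) * (1 - x) ^ (b - 1) = c
  have hg := (continuousOn_det_rpow_mul_exp_trace hSL.posSemidef hSs
    (by positivity : (0 : ℝ) ≤ n / 2) (Y - M) V⁻¹).mono
    (Icc_subset_Ici_self : Icc (0 : ℝ) 1 ⊆ _)
  have hbeta := integrableOn_Ioo_rpow_mul_one_sub_rpow (sub_pos.2 ha) hb
  have hdom : IntegrableOn _ (Ioo (0 : ℝ) 1) :=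
    (hbeta.continuousOn_mul_of_subset hg isCompact_Icc measurableSet_Ioo
      Ioo_subset_Icc_self).const_mul (c / (SL + Ss).det ^ ((n : ℝ) / 2))
  refine IntegrableOn.congr_fun hdom (fun α hα => ?_) measurableSet_Ioo
  have hαS : (α • SL + Ss).PosDef := PosDef.posSemidef_add (hSL.posSemidef.smul hα.1.le) hSs
  rw [sub_one_smul_inv_mul_mul_inv_eq_inv_sub_smul_inv hα.1.ne'
      (isUnit_iff_ne_zero.2 (hSL.add hSs).det_pos.ne') (isUnit_iff_ne_zero.2 hαS.det_pos.ne'),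
    det_add_inv_smul_rpow hα.1 hαS.det_pos.le, Fintype.card_fin,
    show a - n * p / 2 - 1 = -(p * (n / 2)) + (a - 1) by ring, Real.rpow_add hα.1]
  ring

/-- If `a > np/2` and `b > 0`, then the integrated Bayes factor
`∫₀¹ H(α) (1/B(a,b)) α^(a−1)(1−α)^(b−1) dα` is finite (the integrand is integrable
on `(0,1)`), where `B(a,b)` is the Euler Beta function. -/
theorem integrated_bf_integrable
    (p n : ℕ) (hp : 0 < p) (hn : 0 < n)
    (SL Ss : Matrix (Fin p) (Fin p) ℝ) (hSL : SL.PosDef) (hSs : Ss.PosDef)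
    (V : Matrix (Fin n) (Fin n) ℝ) (hV : V.PosDef)
    (Y M : Matrix (Fin p) (Fin n) ℝ)
    (a b : ℝ) (ha : (n : ℝ) * p / 2 < a) (hb : 0 < b) :
    IntegrableOn
      (fun α : ℝ =>
        ((SL + α⁻¹ • Ss).det ^ ((n : ℝ) / 2) / (SL + Ss).det ^ ((n : ℝ) / 2) *
            Real.exp (-(1 / 2) * Matrix.trace
              (((α⁻¹ - 1) • ((SL + Ss)⁻¹ * Ss * (SL + α⁻¹ • Ss)⁻¹)) *
                (Y - M) * V⁻¹ * (Y - M)ᵀ))) *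
          ((1 / ∫ x in Set.Ioo (0:ℝ) 1, x ^ (a - 1) * (1 - x) ^ (b - 1)) *
            α ^ (a - 1) * (1 - α) ^ (b - 1)))
      (Set.Ioo (0:ℝ) 1) :=
  integrated_bf_integrable_general p n SL Ss hSL hSs V Y M a b ha hb
end

section
/- For every α with (p+2n)/m_d < α < 1, one has χ(α) < 1, where χ(α) = α^(np/2)·det(I_n + (αk/(αk+1))·Ψ⁻¹E)^((α·m_d − n − 1)/2) / det(I_n + (k/(k+1))·Ψ⁻¹E)^((m_d − n − 1)/2). -/
/-!
`det (1 + t Ψ⁻¹E) = ∏ᵢ (1 + t μᵢ)` with `μᵢ ≥ 0` the eigenvalues of `√E Ψ⁻¹ √E`, which is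
at least `1` and nondecreasing in `t ≥ 0`. Since `αk/(αk+1) ≤ k/(k+1)` and
`0 ≤ (α m_d − n − 1)/2 ≤ (m_d − n − 1)/2`, the quotient of determinant powers is at most `1`,
while `α^(np/2) < 1`.
-/

open Matrix

variable {ι : Type*} [Fintype ι] [DecidableEq ι]

theorem Matrix.IsHermitian.det_one_add_smul {M : Matrix ι ι ℝ} (hM : M.IsHermitian) (t : ℝ) :
    (1 + t • M).det = ∏ i, (1 + t * hM.eigenvalues i) := by
  set U : Matrix ι ι ℝ := (hM.eigenvectorUnitary : Matrix ι ι ℝ)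
  have hU : U * star U = 1 := Matrix.mem_unitaryGroup_iff.mp hM.eigenvectorUnitary.2
  have hdiag : 1 + t • M = U * diagonal (fun i => 1 + t * hM.eigenvalues i) * star U := by
    rw [show diagonal (fun i => 1 + t * hM.eigenvalues i)
        = 1 + t • diagonal (RCLike.ofReal ∘ hM.eigenvalues) by
      rw [← diagonal_one, ← diagonal_smul, ← diagonal_add]; rfl]
    rw [mul_add, add_mul, mul_one, hU, Matrix.mul_smul, Matrix.smul_mul,
      ← Unitary.conjStarAlgAut_apply (S := ℝ), ← hM.spectral_theorem]
  rw [hdiag, det_mul_right_comm, hU, one_mul, det_diagonal]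

/-- Sylvester's identity `det (1 + X N) = det (1 + N X)` with `N = √E` replaces `A E` by the
positive semidefinite matrix `N A N`. -/
theorem Matrix.PosSemidef.exists_det_one_add_smul_mul_eq_prod {A E : Matrix ι ι ℝ}
    (hA : A.PosSemidef) (hE : E.PosSemidef) :
    ∃ μ : ι → ℝ, (∀ i, 0 ≤ μ i) ∧ ∀ t : ℝ, (1 + t • (A * E)).det = ∏ i, (1 + t * μ i) := by
  open scoped MatrixOrder in
  obtain ⟨N, hN, hNN⟩ : ∃ N : Matrix ι ι ℝ, N.IsHermitian ∧ N * N = E :=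
    ⟨CFC.sqrt E, (CFC.sqrt_nonneg E).posSemidef.isHermitian, CFC.sqrt_mul_sqrt_self E hE.nonneg⟩
  have hNAN : (N * A * N).PosSemidef := by
    simpa only [hN.eq] using hA.conjTranspose_mul_mul_same N
  refine ⟨hNAN.isHermitian.eigenvalues, hNAN.eigenvalues_nonneg, fun t => ?_⟩
  rw [← hNAN.isHermitian.det_one_add_smul, ← hNN, ← Matrix.mul_assoc, ← Matrix.smul_mul,
    det_one_add_mul_comm, Matrix.mul_smul, Matrix.mul_assoc]

theorem Matrix.PosSemidef.monotoneOn_det_one_add_smul_mul {A E : Matrix ι ι ℝ}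
    (hA : A.PosSemidef) (hE : E.PosSemidef) :
    MonotoneOn (fun t : ℝ => (1 + t • (A * E)).det) (Set.Ici 0) := by
  obtain ⟨μ, hμ, hdet⟩ := hA.exists_det_one_add_smul_mul_eq_prod hE
  intro s hs t _ hst
  simp only [hdet]
  exact Finset.prod_le_prod (fun i _ => by nlinarith [hμ i, Set.mem_Ici.mp hs])
    fun i _ => by nlinarith [hμ i]

theorem Real.rpow_mul_rpow_div_rpow_lt_one {c e x y a b : ℝ} (hc₀ : 0 ≤ c) (hc₁ : c < 1)
    (he : 0 < e) (hx : 1 ≤ x) (hxy : x ≤ y) (ha : 0 ≤ a) (hab : a ≤ b) :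
    c ^ e * x ^ a / y ^ b < 1 := by
  have hxy' : x ^ a ≤ y ^ b := calc
    x ^ a ≤ y ^ a := Real.rpow_le_rpow (by linarith) hxy ha
    _ ≤ y ^ b := Real.rpow_le_rpow_of_exponent_le (hx.trans hxy) hab
  rw [div_lt_one (Real.rpow_pos_of_pos (by linarith) b)]
  calc c ^ e * x ^ a < 1 * x ^ a :=
        mul_lt_mul_of_pos_right (Real.rpow_lt_one hc₀ hc₁ he) (Real.rpow_pos_of_pos (by linarith) a)
    _ ≤ y ^ b := by rwa [one_mul]

/-- For every `α` with `(p+2n)/m_d < α < 1`, one has `χ(α) < 1`, where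
`χ(α) = α^(np/2) det(I + (αk/(αk+1)) Ψ⁻¹E)^((α m_d − n − 1)/2) /
        det(I + (k/(k+1)) Ψ⁻¹E)^((m_d − n − 1)/2)`. -/
theorem chi_lt_one
    (n p : ℕ) (hn : 0 < n) (hp : 0 < p)
    (Ψ : Matrix (Fin n) (Fin n) ℝ) (hΨ : Ψ.PosDef)
    (E : Matrix (Fin n) (Fin n) ℝ) (hE : E.PosSemidef)
    (k : ℝ) (hk : 0 < k)
    (md : ℝ) (hmd : (p : ℝ) + 2 * n < md)
    (α : ℝ) (hα₁ : ((p : ℝ) + 2 * n) / md < α) (hα₂ : α < 1) :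
    α ^ ((n : ℝ) * p / 2) *
        ((1 : Matrix (Fin n) (Fin n) ℝ) + (α * k / (α * k + 1)) • (Ψ⁻¹ * E)).det ^
          ((α * md - n - 1) / 2) /
        ((1 : Matrix (Fin n) (Fin n) ℝ) + (k / (k + 1)) • (Ψ⁻¹ * E)).det ^
          ((md - n - 1) / 2) < 1 := by
  have hn' : (1 : ℝ) ≤ n := by exact_mod_cast hn
  have hp' : (1 : ℝ) ≤ p := by exact_mod_cast hp
  have hmd₀ : 0 < md := by linarith
  have hαmd : (p : ℝ) + 2 * n < α * md := (div_lt_iff₀ hmd₀).mp hα₁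
  have hα₀ : 0 < α := pos_of_mul_pos_left (by linarith) hmd₀.le
  have hdet := hΨ.inv.posSemidef.monotoneOn_det_one_add_smul_mul hE
  have hs : 0 ≤ α * k / (α * k + 1) := by positivity
  have hst : α * k / (α * k + 1) ≤ k / (k + 1) := by
    rw [div_le_div_iff₀ (by positivity) (by positivity)]
    nlinarith
  have hone : 1 ≤ ((1 : Matrix (Fin n) (Fin n) ℝ) + (α * k / (α * k + 1)) • (Ψ⁻¹ * E)).det := by
    simpa using hdet Set.self_mem_Ici hs hs
  exact Real.rpow_mul_rpow_div_rpow_lt_one hα₀.le hα₂ (by positivity) hone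
    (hdet hs (hs.trans hst) hst) (by linarith) (by nlinarith)
end
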